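/- Let a = a₀ + N be an element of a commutative ring where a₀ is a positive real scalar and N is nilpotent with N^(n+1) = 0. Define a^p := ∑_{j=0}^{n} (N^j / j!) · (-1)^j · (-p)_j · a₀^(p-j), where (q)_j is the rising Pochhammer symbol. Then for all real p, q: a^p · a^q = a^(p+q). -/

import Mathlib

/-!
Rewriting the coefficients with generalized binomial coefficients, `a ^ p` is the binomial
series `∑ (p choose j) a₀ ^ (p - j) N ^ j`. Since `N ^ (n + 1) = 0`, the product of two such
truncated series is the truncated Cauchy product, and its coefficients are computed by the
Chu–Vandermonde identity `(p + q choose k) = ∑_{i + j = k} (p choose i) (q choose j)` together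
with `a₀ ^ (p - i) a₀ ^ (q - j) = a₀ ^ (p + q - k)`.
-/

/-- Truncated binomial-series power `a ^ p` for an element `a = a₀·1 + K` of a commutative
`ℝ`-algebra, with positive real body `a₀` and nilpotent part `K` satisfying `K ^ (n+1) = 0`:
`a ^ p = ∑_{j=0}^{n} (K^j / j!) · (-1)^j · (-p)_j · a₀ ^ (p - j)`,
where `(q)_j` is the rising Pochhammer symbol. -/
noncomputable def superPow {A : Type*} [CommRing A] [Algebra ℝ A] (n : ℕ)
    (x₀ : ℝ) (K : A) (p : ℝ) : A :=
  ∑ j ∈ Finset.range (n + 1),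
    (((-1 : ℝ) ^ j * (ascPochhammer ℝ j).eval (-p) * x₀ ^ (p - (j : ℝ))) / (j.factorial : ℝ))
      • K ^ j

open Finset

theorem neg_one_pow_mul_ascPochhammer_eval_neg {R : Type*} [CommRing R] [BinomialRing R]
    (r : R) (j : ℕ) :
    (-1) ^ j * (ascPochhammer R j).eval (-r) = j.factorial * Ring.choose r j := by
  rw [← Polynomial.ascPochhammer_smeval_eq_eval,
    Polynomial.ascPochhammer_smeval_neg_eq_descPochhammer,
    Ring.descPochhammer_eq_factorial_smul_choose, Units.smul_def, zsmul_eq_mul,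
    Int.cast_negOnePow_natCast, nsmul_eq_mul, ← mul_assoc, ← mul_pow]
  simp

theorem superPow_eq_sum_choose {A : Type*} [CommRing A] [Algebra ℝ A] (n : ℕ)
    (x₀ : ℝ) (K : A) (p : ℝ) :
    superPow n x₀ K p = ∑ j ∈ range (n + 1), (Ring.choose p j * x₀ ^ (p - j)) • K ^ j := by
  refine sum_congr rfl fun j _ => congrArg (· • K ^ j) ?_
  rw [neg_one_pow_mul_ascPochhammer_eval_neg]
  field_simp

theorem sum_smul_pow_mul_sum_smul_pow_of_pow_eq_zero {R A : Type*} [CommSemiring R]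
    [Semiring A] [Algebra R A] {N : A} {n : ℕ} (hN : N ^ (n + 1) = 0) (c d : ℕ → R) :
    (∑ i ∈ range (n + 1), c i • N ^ i) * (∑ j ∈ range (n + 1), d j • N ^ j) =
      ∑ k ∈ range (n + 1), (∑ x ∈ antidiagonal k, c x.1 * d x.2) • N ^ k := by
  set f : ℕ → ℕ → A := fun i j => (c i * d j) • N ^ (i + j)
  have hf_zero : ∀ i j, n + 1 ≤ i + j → f i j = 0 := fun i j h => by
    dsimp only [f]
    rw [← Nat.add_sub_of_le h, pow_add, hN, zero_mul, smul_zero]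
  calc (∑ i ∈ range (n + 1), c i • N ^ i) * (∑ j ∈ range (n + 1), d j • N ^ j)
      = ∑ i ∈ range (n + 1), ∑ j ∈ range (n + 1), f i j := by
        simp only [f, sum_mul_sum, smul_mul_smul_comm, pow_add]
    _ = ∑ i ∈ range (n + 1), ∑ j ∈ range (n + 1 - i), f i j := by
        refine sum_congr rfl fun i _ => (sum_subset (range_subset_range.2 (by omega)) ?_).symm
        intro j _ hj
        exact hf_zero i j (by simp only [mem_range] at hj; omega)
    _ = ∑ k ∈ range (n + 1), ∑ i ∈ range (k + 1), f i (k - i) := (sum_range_diag_flip _ f).symm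
    _ = ∑ k ∈ range (n + 1), (∑ x ∈ antidiagonal k, c x.1 * d x.2) • N ^ k := by
        refine sum_congr rfl fun k _ => ?_
        rw [Nat.sum_antidiagonal_eq_sum_range_succ (fun i j => c i * d j), sum_smul]
        refine sum_congr rfl fun i hi => ?_
        simp only [f, Nat.add_sub_of_le (Nat.lt_succ_iff.1 (mem_range.1 hi))]

theorem sum_antidiagonal_choose_mul_rpow {a : ℝ} (ha : 0 < a) (p q : ℝ) (k : ℕ) :
    ∑ x ∈ antidiagonal k, (Ring.choose p x.1 * a ^ (p - x.1)) * (Ring.choose q x.2 * a ^ (q - x.2))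
      = Ring.choose (p + q) k * a ^ (p + q - k) := by
  rw [Ring.add_choose_eq k (Commute.all p q), sum_mul]
  refine sum_congr rfl fun x hx => ?_
  rw [← mem_antidiagonal.1 hx, Nat.cast_add, mul_mul_mul_comm, ← Real.rpow_add ha]
  ring_nf

/-- For `a = a₀ + N` with `a₀ > 0` and `N` nilpotent with `N^(n+1) = 0`,
one has `a^p · a^q = a^(p+q)` for all real `p, q`. -/
theorem superPow_mul_superPow {A : Type*} [CommRing A] [Algebra ℝ A] (n : ℕ)
    (a₀ : ℝ) (ha : 0 < a₀) (N : A) (hN : N ^ (n + 1) = 0) (p q : ℝ) :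
    superPow n a₀ N p * superPow n a₀ N q = superPow n a₀ N (p + q) := by
  simp only [superPow_eq_sum_choose, sum_smul_pow_mul_sum_smul_pow_of_pow_eq_zero hN,
    sum_antidiagonal_choose_mul_rpow ha]
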